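/- Let F: T → T' be a quotient functor between triangulated categories. Assume that N ⊆ T and N' ⊆ T' are triangulated subcategories such that F(N) ⊆ N'. Then the functor T/N → T'/N' between the Verdier quotient categories induced by F is a quotient functor. -/

import Mathlib

/-!
Formalization of results from X.-W. Chen, "Unifying two results of D. Orlov".
Since Mathlib does not yet provide coherent sheaves, bounded derived categories of
abelian categories, nor singularity categories, these are axiomatized below by
structures whose fields record the standard objects and their characterizing
properties; Verdier quotients are encoded via `Functor.IsLocalization` with respect
to the class of morphisms whose cone lies in the given subcategory.
-/

open CategoryTheory Limits Pretriangulated ZeroObject AlgebraicGeometry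

universe v₁ u₁ v₂ u₂ v₃ u₃ v₄ u₄ v u

namespace OrlovUnify

section Triangulated

variable (C : Type u) [Category.{v} C] [HasZeroObject C] [HasShift C ℤ] [Preadditive C]
  [∀ n : ℤ, (shiftFunctor C n).Additive] [Pretriangulated C]

/-- A (strictly full) triangulated subcategory of a pretriangulated category,
given by its set of objects: it contains the zero object and is closed under
shifts and extensions. -/
structure IsTriangulatedSubcategory (P : Set C) : Prop where
  zero : (0 : C) ∈ P
  shift : ∀ X ∈ P, ∀ n : ℤ, (X⟦n⟧ : C) ∈ P
  ext₂ : ∀ T ∈ distTriang C, T.obj₁ ∈ P → T.obj₃ ∈ P → T.obj₂ ∈ P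

/-- A thick triangulated subcategory: a triangulated subcategory which is moreover
closed under direct summands (equivalently, retracts). -/
structure IsThickSubcategory (P : Set C) extends IsTriangulatedSubcategory C P : Prop where
  retract : ∀ X Y : C, X ∈ P → (∃ (i : Y ⟶ X) (r : X ⟶ Y), i ≫ r = 𝟙 Y) → Y ∈ P

/-- `thickClosure C S` is the smallest thick triangulated subcategory of `C`
containing `S`, i.e. the thick subcategory *generated* by `S`, denoted `thick⟨S⟩`. -/
def thickClosure (S : Set C) : Set C :=
  ⋂₀ {P : Set C | IsThickSubcategory C P ∧ S ⊆ P}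

/-- The class of morphisms of `C` whose cone lies in `N`. The Verdier quotient `C/N`
is by definition the localization of `C` with respect to this class; hence a functor
`L : C ⥤ D` satisfying `L.IsLocalization (subW C N)` exhibits `D` as the Verdier
quotient `C/N`. -/
def subW (N : Set C) : MorphismProperty C := fun X Y f =>
  ∃ (Z : C) (g : Y ⟶ Z) (h : Z ⟶ X⟦(1 : ℤ)⟧),
    (Triangle.mk f g h ∈ distTriang C) ∧ Z ∈ N

variable {C} in
/-- The essential kernel of a functor: the objects sent to zero objects. -/
def kernelObjects {D : Type*} [Category D] (F : C ⥤ D) : Set C := {X : C | IsZero (F.obj X)}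

variable {C} in
/-- A triangle functor `F : C ⥤ D` is a *quotient functor* if the induced functor
`C/(Ker F) ⥤ D` from the Verdier quotient of `C` by the essential kernel of `F` is an
equivalence; equivalently, `F` is a localization with respect to the class of morphisms
whose cone is killed by `F`. -/
def IsQuotientFunctor {D : Type*} [Category D] (F : C ⥤ D) : Prop :=
  F.IsLocalization (subW C (kernelObjects F))

end Triangulated

end OrlovUnify

open OrlovUnify

/-!
Write `W_N` for the morphisms with cone in `N`. Since `F` is a localization at `W_{Ker F}` and
distinguished triangles of `T'` lift along `F`, the composite `F ⋙ L₂` is a localization at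
`W_M` with `M = Ker (F ⋙ L₂)`. Hence so is `L₁ ⋙ G ≅ F ⋙ L₂`; as `W_N ⊆ W_M`, the functor `G`
is a localization at the image of `W_M` under `L₁`, which is `W_{Ker G}` because distinguished
triangles of `Q₁` lift along `L₁`.
-/

namespace OrlovUnify

lemma kernelObjects_eq_of_iso {C D : Type*} [Category C] [Category D] {F G : C ⥤ D} (e : F ≅ G) :
    kernelObjects F = kernelObjects G := by
  ext X
  exact ⟨fun h => h.of_iso (e.app X).symm, fun h => h.of_iso (e.app X)⟩

variable {C : Type u} [Category.{v} C] [HasZeroObject C] [HasShift C ℤ] [Preadditive C]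
  [∀ n : ℤ, (shiftFunctor C n).Additive] [Pretriangulated C]

lemma subW_eq_trW (N : Set C) : subW C N = ObjectProperty.trW (· ∈ N) := by
  ext X Y f
  exact ⟨fun ⟨Z, g, h, hT, hZ⟩ => ⟨Z, g, h, hT, hZ⟩, fun ⟨Z, g, h, hT, hZ⟩ => ⟨Z, g, h, hT, hZ⟩⟩

lemma subW_mono {N M : Set C} (h : N ⊆ M) : subW C N ≤ subW C M :=
  fun _ _ _ ⟨Z, g, k, hT, hZ⟩ => ⟨Z, g, k, hT, h hZ⟩

lemma IsTriangulatedSubcategory.isTriangulated {N : Set C} (hN : IsTriangulatedSubcategory C N) :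
    ObjectProperty.IsTriangulated (· ∈ N) where
  exists_zero := ⟨0, isZero_zero C, hN.zero⟩
  isStableUnderShiftBy a := ⟨fun X hX => hN.shift X hX a⟩
  ext₂' T hT h₁ h₃ := ObjectProperty.le_isoClosure _ _ (hN.ext₂ T hT h₁ h₃)

lemma IsTriangulatedSubcategory.hasLeftCalculusOfFractions [IsTriangulated C] {N : Set C}
    (hN : IsTriangulatedSubcategory C N) : (subW C N).HasLeftCalculusOfFractions := by
  have := hN.isTriangulated
  rw [subW_eq_trW]
  infer_instance

lemma IsTriangulatedSubcategory.essSurj_mapArrow [IsTriangulated C] {N : Set C}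
    (hN : IsTriangulatedSubcategory C N) {D : Type*} [Category D] (L : C ⥤ D)
    [L.IsLocalization (subW C N)] : L.mapArrow.EssSurj :=
  have := hN.hasLeftCalculusOfFractions
  Localization.essSurj_mapArrow L (subW C N)

lemma IsTriangulatedSubcategory.subset_kernelObjects {N : Set C}
    (hN : IsTriangulatedSubcategory C N) {D : Type*} [Category D] [HasZeroMorphisms D]
    (L : C ⥤ D) [L.PreservesZeroMorphisms] (hL : (subW C N).IsInvertedBy L) :
    N ⊆ kernelObjects L := by
  intro X hX
  -- the cone of `X ⟶ 0` is `X⟦1⟧`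
  have hw : subW C N (0 : X ⟶ 0) :=
    ⟨X⟦(1 : ℤ)⟧, 0, -(𝟙 X)⟦(1 : ℤ)⟧',
      rot_of_distTriang _ (contractible_distinguished X), hN.shift X hX 1⟩
  have : IsIso (L.map (0 : X ⟶ 0)) := hL _ hw
  exact (L.map_isZero (isZero_zero C)).of_iso (asIso (L.map (0 : X ⟶ 0)))

section TriangulatedFunctor

variable {D : Type*} [Category D] [HasZeroObject D] [HasShift D ℤ] [Preadditive D]
  [∀ n : ℤ, (shiftFunctor D n).Additive] [Pretriangulated D]
  (L : C ⥤ D) [L.CommShift ℤ] [L.IsTriangulated]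

lemma kernelObjects_isTriangulatedSubcategory :
    IsTriangulatedSubcategory C (kernelObjects L) where
  zero := L.map_isZero (isZero_zero C)
  shift X hX n := ((shiftFunctor D n).map_isZero hX).of_iso ((L.commShiftIso n).app X)
  ext₂ T hT h₁ h₃ := Triangle.isZero₂_of_isZero₁₃ _ (L.map_distinguished T hT) h₁ h₃

lemma subW_kernelObjects_isInvertedBy : (subW C (kernelObjects L)).IsInvertedBy L := by
  rintro X Y f ⟨Z, g, h, hT, hZ⟩
  exact (Triangle.isZero₃_iff_isIso₁ _ (L.map_distinguished _ hT)).1 hZ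

lemma subW_kernelObjects_eq_map [L.mapArrow.EssSurj] {E : Type*} [Category E] (G : D ⥤ E) :
    subW D (kernelObjects G) = (subW C (kernelObjects (L ⋙ G))).map L := by
  ext X' Y' f'
  constructor
  · rintro ⟨Z', g', h', hT', hZ'⟩
    obtain ⟨T, hT, ⟨eT⟩⟩ := L.mem_mapTriangle_essImage_of_distinguished _ hT'
    exact ⟨_, _, T.mor₁, ⟨_, _, _, hT, hZ'.of_iso (G.mapIso (Triangle.π₃.mapIso eT))⟩,
      ⟨Arrow.isoMk (Triangle.π₁.mapIso eT) (Triangle.π₂.mapIso eT) eT.hom.comm₁.symm⟩⟩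
  · rintro ⟨X, Y, f, ⟨Z, g, h, hT, hZ⟩, ⟨eL⟩⟩
    rw [subW_eq_trW]
    exact (MorphismProperty.arrow_mk_iso_iff _ eL).1
      (ObjectProperty.trW.mk _ (L.map_distinguished _ hT) hZ)

end TriangulatedFunctor

end OrlovUnify

/-- **Lemma 2.1**. Let `F : T ⥤ T'` be a quotient functor between triangulated
categories, and let `N ⊆ T`, `N' ⊆ T'` be triangulated subcategories with
`F(N) ⊆ N'`.  Then any functor `G : T/N ⥤ T'/N'` induced by `F` between the Verdier
quotient categories (i.e. making the square with the two Verdier quotient functors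
commute up to isomorphism) is a quotient functor. -/
theorem induced_functor_isQuotientFunctor
    {T : Type u₁} [Category.{v₁} T] [HasZeroObject T] [HasShift T ℤ] [Preadditive T]
    [∀ n : ℤ, (shiftFunctor T n).Additive] [Pretriangulated T] [IsTriangulated T]
    {T' : Type u₂} [Category.{v₂} T'] [HasZeroObject T'] [HasShift T' ℤ] [Preadditive T']
    [∀ n : ℤ, (shiftFunctor T' n).Additive] [Pretriangulated T'] [IsTriangulated T']
    (F : T ⥤ T') [F.CommShift ℤ] [F.IsTriangulated]
    (hF : IsQuotientFunctor F)
    {N : Set T} {N' : Set T'}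
    (hN : IsTriangulatedSubcategory T N) (hN' : IsTriangulatedSubcategory T' N')
    (hFN : ∀ X ∈ N, F.obj X ∈ N')
    {Q₁ : Type u₃} [Category.{v₃} Q₁] [HasZeroObject Q₁] [HasShift Q₁ ℤ] [Preadditive Q₁]
    [∀ n : ℤ, (shiftFunctor Q₁ n).Additive] [Pretriangulated Q₁]
    {Q₂ : Type u₄} [Category.{v₄} Q₂] [HasZeroObject Q₂] [HasShift Q₂ ℤ] [Preadditive Q₂]
    [∀ n : ℤ, (shiftFunctor Q₂ n).Additive] [Pretriangulated Q₂]
    (L₁ : T ⥤ Q₁) [L₁.CommShift ℤ] [L₁.IsTriangulated]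
    (hL₁ : L₁.IsLocalization (subW T N))
    (L₂ : T' ⥤ Q₂) [L₂.CommShift ℤ] [L₂.IsTriangulated]
    (hL₂ : L₂.IsLocalization (subW T' N'))
    (G : Q₁ ⥤ Q₂) (e : L₁ ⋙ G ≅ F ⋙ L₂) :
    IsQuotientFunctor G := by
  have : F.IsLocalization (subW T (kernelObjects F)) := hF
  have := hL₁
  have := hL₂
  have := (kernelObjects_isTriangulatedSubcategory F).essSurj_mapArrow F
  have := hN.essSurj_mapArrow L₁
  have hN'L₂ : N' ⊆ kernelObjects L₂ := hN'.subset_kernelObjects L₂ (Localization.inverts L₂ _)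
  have hNM : N ⊆ kernelObjects (F ⋙ L₂) := fun X hX => hN'L₂ (hFN X hX)
  have hFM : kernelObjects F ⊆ kernelObjects (F ⋙ L₂) := fun X hX => L₂.map_isZero hX
  have : (F ⋙ L₂).IsLocalization (subW T (kernelObjects (F ⋙ L₂))) :=
    Functor.IsLocalization.comp F L₂ _ _ _ (subW_kernelObjects_isInvertedBy (F ⋙ L₂))
      (subW_mono hFM) ((subW_mono hN'L₂).trans (subW_kernelObjects_eq_map F L₂).le)
  have : (L₁ ⋙ G).IsLocalization (subW T (kernelObjects (F ⋙ L₂))) :=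
    Functor.IsLocalization.of_iso _ e.symm
  exact Functor.IsLocalization.of_comp L₁ G (subW T N) _ _ (subW_mono hNM)
    (by rw [subW_kernelObjects_eq_map L₁ G, kernelObjects_eq_of_iso e])
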